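/- Let A be a self-adjoint trace-class operator on a separable Hilbert space H, P an orthogonal projection, and ψ : ℝ → ℂ a function whose Fourier transform ψ̂ satisfies ∫ |t| |ψ̂(t)| dt < ∞ (with ψ recovered as ψ(B) = (2π)^{−1/2} ∫ e^{iBt} ψ̂(t) dt). Then ‖P ψ(A) P − P ψ(PAP) P‖_{S₁} ≤ (2π)^{−1/2} ‖PA(I−P)‖_{S₁} ∫ |t| |ψ̂(t)| dt. -/

import Mathlib

open scoped ENNReal
open MeasureTheory

/-- The trace norm of a bounded operator on a Hilbert space, defined as the supremum
over pairs of finite orthonormal families of `∑ j |⟪T e_j, f_j⟫|`. -/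
noncomputable def traceNorm {H : Type*} [NormedAddCommGroup H] [InnerProductSpace ℂ H]
    (T : H →L[ℂ] H) : ℝ≥0∞ :=
  ⨆ (n : ℕ) (e : Fin n → H) (f : Fin n → H)
    (_ : Orthonormal ℂ e) (_ : Orthonormal ℂ f),
      ∑ j, (‖(inner ℂ (T (e j)) (f j) : ℂ)‖₊ : ℝ≥0∞)

/-- `evol t B = e^{iBt}`. -/
noncomputable def evol {H : Type*} [NormedAddCommGroup H] [InnerProductSpace ℂ H]
    [CompleteSpace H] (t : ℝ) (B : H →L[ℂ] H) : H →L[ℂ] H :=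
  NormedSpace.exp ((Complex.I * (t : ℂ)) • B)

/-- `ψ(B) = (2π)^{-1/2} ∫ e^{iBt} ψ̂(t) dt`. -/
noncomputable def opFun {H : Type*} [NormedAddCommGroup H] [InnerProductSpace ℂ H]
    [CompleteSpace H] (B : H →L[ℂ] H) (ψhat : ℝ → ℂ) : H →L[ℂ] H :=
  (Real.sqrt (2*Real.pi))⁻¹ • ∫ t : ℝ, ψhat t • evol t B

/-!
By Duhamel's formula, `e^{itA} - e^{itPAP} = ∫₀ᵗ e^{i(t-s)A} i(A - PAP) e^{isPAP} ds`. Since `P`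
commutes with `e^{isPAP}`, compressing the integrand by `P` turns `A - PAP` into the off-diagonal
block `(1 - P)AP = (PA(1 - P))*`. The trace norm does not grow under adjoints, multiplication by
unitaries, or by a projection `P = ((2P - 1) + 1)/2`, so `‖P(e^{itA} - e^{itPAP})P‖₁ ≤
|t| ‖PA(1 - P)‖₁`. Integrating against `ψ̂`, using `‖∫ F‖₁ ≤ ∫ ‖F‖₁`, gives the theorem.
-/

open scoped InnerProductSpace

section TraceNorm

variable {H : Type*} [NormedAddCommGroup H] [InnerProductSpace ℂ H]

theorem le_traceNorm (T : H →L[ℂ] H) {n : ℕ} {e f : Fin n → H} (he : Orthonormal ℂ e)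
    (hf : Orthonormal ℂ f) : ∑ j, ‖⟪T (e j), f j⟫_ℂ‖ₑ ≤ traceNorm T :=
  le_iSup_of_le n <| le_iSup_of_le e <| le_iSup_of_le f <|
    le_iSup_of_le he <| le_iSup_of_le hf le_rfl

theorem traceNorm_le {T : H →L[ℂ] H} {b : ℝ≥0∞}
    (h : ∀ (n : ℕ) (e f : Fin n → H), Orthonormal ℂ e → Orthonormal ℂ f →
      ∑ j, ‖⟪T (e j), f j⟫_ℂ‖ₑ ≤ b) :
    traceNorm T ≤ b :=
  iSup_le fun n ↦ iSup_le fun e ↦ iSup_le fun f ↦ iSup_le fun he ↦ iSup_le fun hf ↦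
    h n e f he hf

@[simp]
theorem traceNorm_zero : traceNorm (0 : H →L[ℂ] H) = 0 :=
  nonpos_iff_eq_zero.mp <| traceNorm_le fun _ _ _ _ _ ↦ by simp

@[simp]
theorem traceNorm_neg (T : H →L[ℂ] H) : traceNorm (-T) = traceNorm T := by
  simp only [traceNorm, neg_apply, inner_neg_left, nnnorm_neg]

theorem traceNorm_add_le (S T : H →L[ℂ] H) : traceNorm (S + T) ≤ traceNorm S + traceNorm T :=
  traceNorm_le fun n e f he hf ↦ calc
    ∑ j, ‖⟪(S + T) (e j), f j⟫_ℂ‖ₑ ≤ ∑ j, (‖⟪S (e j), f j⟫_ℂ‖ₑ + ‖⟪T (e j), f j⟫_ℂ‖ₑ) :=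
      Finset.sum_le_sum fun j _ ↦ by
        simpa only [add_apply, inner_add_left] using enorm_add_le _ _
    _ ≤ traceNorm S + traceNorm T := by
      rw [Finset.sum_add_distrib]
      exact add_le_add (le_traceNorm S he hf) (le_traceNorm T he hf)

theorem traceNorm_smul_le (c : ℂ) (T : H →L[ℂ] H) : traceNorm (c • T) ≤ ‖c‖ₑ * traceNorm T :=
  traceNorm_le fun n e f he hf ↦ by
    simp only [smul_apply, inner_smul_left, enorm_mul, RCLike.enorm_conj,
      ← Finset.mul_sum]
    gcongr
    exact le_traceNorm T he hf

variable [CompleteSpace H]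

theorem traceNorm_star_le (T : H →L[ℂ] H) : traceNorm (star T) ≤ traceNorm T :=
  traceNorm_le fun n e f he hf ↦ calc
    ∑ j, ‖⟪star T (e j), f j⟫_ℂ‖ₑ = ∑ j, ‖⟪T (f j), e j⟫_ℂ‖ₑ := by
      refine Finset.sum_congr rfl fun j _ ↦ ?_
      rw [ContinuousLinearMap.star_eq_adjoint, ContinuousLinearMap.adjoint_inner_left,
        ← inner_conj_symm, RCLike.enorm_conj]
    _ ≤ traceNorm T := le_traceNorm T hf he

@[simp]
theorem traceNorm_star (T : H →L[ℂ] H) : traceNorm (star T) = traceNorm T :=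
  le_antisymm (traceNorm_star_le T) (by simpa using traceNorm_star_le (star T))

theorem traceNorm_mul_unitary_le (T : H →L[ℂ] H) {U : H →L[ℂ] H}
    (hU : U ∈ unitary (H →L[ℂ] H)) : traceNorm (T * U) ≤ traceNorm T :=
  traceNorm_le fun _ _ _ he hf ↦
    le_traceNorm T (he.comp_linearIsometryEquiv (Unitary.linearIsometryEquiv ⟨U, hU⟩)) hf

theorem traceNorm_unitary_mul_le (T : H →L[ℂ] H) {U : H →L[ℂ] H}
    (hU : U ∈ unitary (H →L[ℂ] H)) : traceNorm (U * T) ≤ traceNorm T := by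
  rw [← traceNorm_star, star_mul, ← traceNorm_star T]
  exact traceNorm_mul_unitary_le (star T) (Unitary.star_mem hU)

theorem traceNorm_mul_isStarProjection_le (T : H →L[ℂ] H) {P : H →L[ℂ] H}
    (hP : IsStarProjection P) : traceNorm (T * P) ≤ traceNorm T := by
  have hTP : T * P = (2⁻¹ : ℂ) • (T * (2 * P - 1) + T) := by
    rw [mul_sub, mul_one, sub_add_cancel, two_mul, mul_add, ← two_smul ℂ, smul_smul,
      inv_mul_cancel₀ two_ne_zero, one_smul]
  calc traceNorm (T * P) ≤ ‖(2⁻¹ : ℂ)‖ₑ * (traceNorm (T * (2 * P - 1)) + traceNorm T) := by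
        rw [hTP]
        grw [traceNorm_smul_le, traceNorm_add_le]
    _ ≤ 2⁻¹ * (traceNorm T + traceNorm T) := by
        grw [traceNorm_mul_unitary_le T hP.two_mul_sub_one_mem_unitary]
        simp [enorm_eq_nnnorm]
    _ = traceNorm T := by
        rw [← two_mul, ← mul_assoc, ENNReal.inv_mul_cancel two_ne_zero ENNReal.ofNat_ne_top,
          one_mul]

theorem traceNorm_isStarProjection_mul_le (T : H →L[ℂ] H) {P : H →L[ℂ] H}
    (hP : IsStarProjection P) : traceNorm (P * T) ≤ traceNorm T := by
  rw [← traceNorm_star, star_mul, hP.isSelfAdjoint.star_eq, ← traceNorm_star T]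
  exact traceNorm_mul_isStarProjection_le (star T) hP

theorem traceNorm_integral_le {α : Type*} [MeasurableSpace α] {μ : Measure α}
    (F : α → H →L[ℂ] H) : traceNorm (∫ x, F x ∂μ) ≤ ∫⁻ x, traceNorm (F x) ∂μ := by
  by_cases hF : Integrable F μ
  swap
  · simp [integral_undef hF]
  refine traceNorm_le fun n e f he hf ↦ ?_
  have hint (j : Fin n) : Integrable (fun x ↦ ⟪f j, F x (e j)⟫_ℂ) μ :=
    (hF.apply_continuousLinearMap (e j)).const_inner (f j)
  calc ∑ j, ‖⟪(∫ x, F x ∂μ) (e j), f j⟫_ℂ‖ₑ = ∑ j, ‖∫ x, ⟪f j, F x (e j)⟫_ℂ ∂μ‖ₑ := by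
        refine Finset.sum_congr rfl fun j _ ↦ ?_
        rw [integral_inner (hF.apply_continuousLinearMap (e j)),
          ← ContinuousLinearMap.integral_apply hF, ← inner_conj_symm, RCLike.enorm_conj]
    _ ≤ ∑ j, ∫⁻ x, ‖⟪f j, F x (e j)⟫_ℂ‖ₑ ∂μ :=
        Finset.sum_le_sum fun j _ ↦ enorm_integral_le_lintegral_enorm _
    _ = ∫⁻ x, ∑ j, ‖⟪F x (e j), f j⟫_ℂ‖ₑ ∂μ := by
        rw [← lintegral_finsetSum' _ fun j _ ↦ (hint j).aemeasurable.enorm]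
        simp only [← inner_conj_symm (F _ _), RCLike.enorm_conj]
    _ ≤ ∫⁻ x, traceNorm (F x) ∂μ := lintegral_mono fun x ↦ le_traceNorm (F x) he hf

theorem traceNorm_intervalIntegral_le (F : ℝ → H →L[ℂ] H) (a b : ℝ) (μ : Measure ℝ) :
    traceNorm (∫ x in a..b, F x ∂μ) ≤ ∫⁻ x in Set.uIoc a b, traceNorm (F x) ∂μ := by
  rw [intervalIntegral.intervalIntegral_eq_integral_uIoc]
  split_ifs <;> simp only [one_smul, neg_one_smul, traceNorm_neg] <;> exact traceNorm_integral_le F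

end TraceNorm

section Duhamel

open NormedSpace

variable {𝔸 : Type*} [NormedRing 𝔸] [NormedAlgebra ℝ 𝔸] [CompleteSpace 𝔸]

theorem exp_smul_sub_exp_smul (X Y : 𝔸) (t : ℝ) :
    exp (t • X) - exp (t • Y) = ∫ s in 0..t, exp ((t - s) • X) * (X - Y) * exp (s • Y) := by
  have hderiv (s : ℝ) : HasDerivAt (fun s : ℝ ↦ exp ((t - s) • X) * exp (s • Y))
      (-(exp ((t - s) • X) * (X - Y) * exp (s • Y))) s := by
    have hX := (hasDerivAt_exp_smul_const X (t - s)).scomp s ((hasDerivAt_id s).const_sub t)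
    refine (hX.mul (hasDerivAt_exp_smul_const' Y s)).congr_deriv ?_
    simp only [Function.comp_apply, neg_smul, one_smul]
    noncomm_ring
  have hcont : Continuous fun s : ℝ ↦ exp ((t - s) • X) * (X - Y) * exp (s • Y) :=
    (((differentiable_exp_smul_const ℝ X).continuous.comp (continuous_const.sub
      continuous_id)).mul continuous_const).mul (differentiable_exp_smul_const ℝ Y).continuous
  have hftc := intervalIntegral.integral_eq_sub_of_hasDerivAt (fun s _ ↦ hderiv s)
    (hcont.neg.intervalIntegrable 0 t)
  simp only [intervalIntegral.integral_neg, sub_self, sub_zero, zero_smul, exp_zero, one_mul,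
    mul_one] at hftc
  rw [← neg_sub, ← hftc, neg_neg]

end Duhamel

section Evolution

variable {H : Type*} [NormedAddCommGroup H] [InnerProductSpace ℂ H] [CompleteSpace H]

theorem evol_eq_exp (t : ℝ) (B : H →L[ℂ] H) :
    evol t B = NormedSpace.exp (t • (Complex.I • B)) := by
  rw [evol, ← Complex.coe_smul, smul_smul, mul_comm]

theorem evol_mem_unitary (t : ℝ) {B : H →L[ℂ] H} (hB : IsSelfAdjoint B) :
    evol t B ∈ unitary (H →L[ℂ] H) :=
  let +nondep : NormedAlgebra ℚ (H →L[ℂ] H) := .restrictScalars ℚ ℂ _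
  NormedSpace.exp_mem_unitary_of_mem_skewAdjoint <| hB.smul_mem_skewAdjoint <| by
    simp [skewAdjoint.mem_iff, Complex.conj_I]

theorem continuous_evol (B : H →L[ℂ] H) : Continuous fun t : ℝ ↦ evol t B := by
  simpa only [evol_eq_exp] using (differentiable_exp_smul_const ℝ (Complex.I • B)).continuous

theorem evol_sub_evol (t : ℝ) (A B : H →L[ℂ] H) :
    evol t A - evol t B = ∫ s in 0..t, evol (t - s) A * (Complex.I • (A - B)) * evol s B := by
  simp only [evol_eq_exp, smul_sub]
  exact exp_smul_sub_exp_smul _ _ t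

theorem traceNorm_compress_evol_sub_le {A P : H →L[ℂ] H} (hA : IsSelfAdjoint A)
    (hP : IsStarProjection P) (t : ℝ) :
    traceNorm (P * (evol t A - evol t (P * A * P)) * P) ≤
      ENNReal.ofReal |t| * traceNorm (P * A * (1 - P)) := by
  set X := P * A * P
  have hX : IsSelfAdjoint X := hA.conjugate_self hP.isSelfAdjoint
  have hPX : Commute P X := by
    simp only [X, Commute, SemiconjBy, ← mul_assoc, hP.isIdempotentElem.eq]
    simp only [mul_assoc, hP.isIdempotentElem.eq]
  have hbound (s : ℝ) :
      traceNorm (P * (evol (t - s) A * (Complex.I • (A - X)) * evol s X) * P) ≤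
        traceNorm (P * A * (1 - P)) := by
    have hPW : Commute P (evol s X) := by
      rw [evol_eq_exp]
      exact ((hPX.smul_right _).smul_right _).exp_right
    have hPD : (A - X) * P = (1 - P) * A * P := by
      simp only [X, sub_mul, one_mul, mul_assoc, hP.isIdempotentElem.eq]
    have hsplit : P * (evol (t - s) A * (Complex.I • (A - X)) * evol s X) * P =
        Complex.I • (P * (evol (t - s) A * ((1 - P) * A * P) * evol s X)) := calc
      _ = P * (evol (t - s) A * (Complex.I • (A - X)) * (P * evol s X)) := by
        simp only [mul_assoc, hPW.eq]
      _ = P * (evol (t - s) A * (Complex.I • ((A - X) * P)) * evol s X) := by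
        simp only [smul_mul_assoc, mul_assoc]
      _ = _ := by
        rw [hPD]
        simp only [smul_mul_assoc, mul_smul_comm]
    calc _ ≤ ‖Complex.I‖ₑ *
          traceNorm (P * (evol (t - s) A * ((1 - P) * A * P) * evol s X)) := by
          rw [hsplit]
          exact traceNorm_smul_le _ _
      _ ≤ traceNorm (evol (t - s) A * ((1 - P) * A * P) * evol s X) := by
          rw [show ‖Complex.I‖ₑ = 1 by simp [enorm_eq_nnnorm], one_mul]
          exact traceNorm_isStarProjection_mul_le _ hP
      _ ≤ traceNorm ((1 - P) * A * P) :=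
          (traceNorm_mul_unitary_le _ (evol_mem_unitary s hX)).trans
            (traceNorm_unitary_mul_le _ (evol_mem_unitary _ hA))
      _ = traceNorm (P * A * (1 - P)) := by
          rw [← traceNorm_star]
          simp [star_mul, hA.star_eq, hP.isSelfAdjoint.star_eq, mul_assoc]
  have hint : IntervalIntegrable
      (fun s ↦ evol (t - s) A * (Complex.I • (A - X)) * evol s X) volume 0 t :=
    (((continuous_evol A).comp (continuous_const.sub continuous_id)).mul continuous_const |>.mul
      (continuous_evol X)).intervalIntegrable 0 t
  calc traceNorm (P * (evol t A - evol t X) * P)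
      = traceNorm (∫ s in 0..t, P * (evol (t - s) A * (Complex.I • (A - X)) * evol s X) * P) := by
        rw [evol_sub_evol]
        exact congrArg traceNorm <|
          ((ContinuousLinearMap.mulLeftRight ℂ _ P P).intervalIntegral_comp_comm hint).symm
    _ ≤ ∫⁻ s in Set.uIoc 0 t,
          traceNorm (P * (evol (t - s) A * (Complex.I • (A - X)) * evol s X) * P) :=
        traceNorm_intervalIntegral_le _ _ _ _
    _ ≤ ∫⁻ _ in Set.uIoc 0 t, traceNorm (P * A * (1 - P)) := lintegral_mono hbound
    _ = ENNReal.ofReal |t| * traceNorm (P * A * (1 - P)) := by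
        rw [setLIntegral_const, Real.volume_uIoc, sub_zero, mul_comm]

theorem integrable_smul_evol {ψhat : ℝ → ℂ} (hψ : Integrable ψhat) {B : H →L[ℂ] H}
    (hB : IsSelfAdjoint B) : Integrable fun t ↦ ψhat t • evol t B :=
  hψ.smul_bdd 1 (continuous_evol B).aestronglyMeasurable <| ae_of_all _ fun t ↦
    (evol t B).opNorm_le_bound zero_le_one fun x ↦ by
      rw [ContinuousLinearMap.norm_map_of_mem_unitary (evol_mem_unitary t hB), one_mul]

theorem compress_opFun_sub_opFun_eq (P : H →L[ℂ] H) {A B : H →L[ℂ] H} (hA : IsSelfAdjoint A)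
    (hB : IsSelfAdjoint B) {ψhat : ℝ → ℂ} (hψ : Integrable ψhat) :
    P * (opFun A ψhat - opFun B ψhat) * P =
      (Real.sqrt (2 * Real.pi))⁻¹ • ∫ t, ψhat t • (P * (evol t A - evol t B) * P) := by
  have hA' := integrable_smul_evol hψ hA
  have hB' := integrable_smul_evol hψ hB
  rw [opFun, opFun, ← smul_sub, ← integral_sub hA' hB', mul_smul_comm, smul_mul_assoc]
  congr 1
  calc P * (∫ t, ψhat t • evol t A - ψhat t • evol t B) * P
      = ∫ t, P * (ψhat t • evol t A - ψhat t • evol t B) * P :=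
        ((ContinuousLinearMap.mulLeftRight ℂ (H →L[ℂ] H) P P).integral_comp_comm
          (hA'.sub hB')).symm
    _ = _ := by simp only [← smul_sub, mul_smul_comm, smul_mul_assoc]

theorem traceNorm_compress_opFun_sub_le (P : H →L[ℂ] H) {A B : H →L[ℂ] H}
    (hA : IsSelfAdjoint A) (hB : IsSelfAdjoint B) {ψhat : ℝ → ℂ} (hψ : Integrable ψhat) :
    traceNorm (P * (opFun A ψhat - opFun B ψhat) * P) ≤
      ENNReal.ofReal (Real.sqrt (2 * Real.pi))⁻¹ *
        ∫⁻ t, ‖ψhat t‖ₑ * traceNorm (P * (evol t A - evol t B) * P) := by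
  rw [compress_opFun_sub_opFun_eq P hA hB hψ, ← Complex.coe_smul]
  grw [traceNorm_smul_le, traceNorm_integral_le]
  rw [← ofReal_norm, Complex.norm_real, Real.norm_of_nonneg (by positivity)]
  gcongr with t
  exact traceNorm_smul_le _ _

end Evolution

theorem stmt_4_general {H : Type*} [NormedAddCommGroup H] [InnerProductSpace ℂ H]
    [CompleteSpace H]
    (A P : H →L[ℂ] H) (hAsa : IsSelfAdjoint A)
    (hPidem : IsIdempotentElem P) (hPsa : IsSelfAdjoint P)
    (ψhat : ℝ → ℂ) (hψ1 : Integrable ψhat)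
    (hψ2 : Integrable (fun t => |t| * ‖ψhat t‖)) :
    traceNorm (P * (opFun A ψhat - opFun (P*A*P) ψhat) * P)
      ≤ ENNReal.ofReal ((Real.sqrt (2*Real.pi))⁻¹ * ∫ t : ℝ, |t| * ‖ψhat t‖) *
          traceNorm (P * A * (1 - P)) := by
  set S := traceNorm (P * A * (1 - P))
  calc traceNorm (P * (opFun A ψhat - opFun (P * A * P) ψhat) * P)
      ≤ ENNReal.ofReal (Real.sqrt (2 * Real.pi))⁻¹ *
          ∫⁻ t, ‖ψhat t‖ₑ * traceNorm (P * (evol t A - evol t (P * A * P)) * P) :=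
        traceNorm_compress_opFun_sub_le P hAsa (hAsa.conjugate_self hPsa) hψ1
    _ ≤ ENNReal.ofReal (Real.sqrt (2 * Real.pi))⁻¹ *
          ∫⁻ t, ENNReal.ofReal (|t| * ‖ψhat t‖) * S := by
        gcongr ENNReal.ofReal _ * ?_
        refine lintegral_mono fun t ↦ ?_
        grw [traceNorm_compress_evol_sub_le hAsa ⟨hPidem, hPsa⟩ t]
        rw [ENNReal.ofReal_mul (abs_nonneg t), ofReal_norm]
        exact le_of_eq (by ring)
    _ = ENNReal.ofReal ((Real.sqrt (2 * Real.pi))⁻¹ * ∫ t, |t| * ‖ψhat t‖) * S := by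
        rw [lintegral_mul_const'' _ hψ2.aemeasurable.ennreal_ofReal,
          ← ofReal_integral_eq_lintegral_ofReal hψ2 (ae_of_all _ fun t ↦ by positivity),
          ENNReal.ofReal_mul (by positivity), mul_assoc]

/-- trace-norm bound for `Pψ(A)P − Pψ(PAP)P`. -/
theorem stmt_4 {H : Type*} [NormedAddCommGroup H] [InnerProductSpace ℂ H]
    [CompleteSpace H] [TopologicalSpace.SeparableSpace H]
    (A P : H →L[ℂ] H) (hAsa : IsSelfAdjoint A) (hAtr : traceNorm A ≠ ⊤)
    (hPidem : IsIdempotentElem P) (hPsa : IsSelfAdjoint P)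
    (ψhat : ℝ → ℂ) (hψ1 : Integrable ψhat)
    (hψ2 : Integrable (fun t => |t| * ‖ψhat t‖)) :
    traceNorm (P * (opFun A ψhat - opFun (P*A*P) ψhat) * P)
      ≤ ENNReal.ofReal ((Real.sqrt (2*Real.pi))⁻¹ * ∫ t : ℝ, |t| * ‖ψhat t‖) *
          traceNorm (P * A * (1 - P)) :=
  stmt_4_general A P hAsa hPidem hPsa ψhat hψ1 hψ2
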